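/- Let J ⊆ {1,...,n} with partition (J_+, J_−), define a_j > 0 for j ∈ J_+ and a_j < 0 for j ∈ J_−. Then the inequality ∑_{j∈J} a_j x_j ≥ α holds for all full circuits x if and only if it holds for all J-circuits that are undominated with respect to (J_+, J_−). -/

import Mathlib

/-- A circuit on `{1,...,n}`: a permutation of `Fin n` that is a single `n`-cycle. -/
def IsCircuitPerm {n : ℕ} (σ : Equiv.Perm (Fin n)) : Prop :=
  σ.IsCycle ∧ σ.support = Finset.univ

/-- A circuit point on values `v`: `x i = v (σ i)` for some single-`n`-cycle permutation `σ`. -/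
def IsCircuitPt {n : ℕ} (v : Fin n → ℝ) (x : Fin n → ℝ) : Prop :=
  ∃ σ : Equiv.Perm (Fin n), IsCircuitPerm σ ∧ ∀ i, x i = v (σ i)

/-- The partial assignment `f` on `J` creates no cycle. -/
def NoCycleOn {n : ℕ} (f : Fin n → Fin n) (J : Finset (Fin n)) : Prop :=
  ¬ ∃ j ∈ J, ∃ k, 0 < k ∧ (∀ t < k, f^[t] j ∈ J) ∧ f^[k] j = j

/-- A `J`-circuit: an injective, cycle-free partial assignment on `J`
(index `j` receives value `v_{f j}`). -/
def IsJCircuit {n : ℕ} (J : Finset (Fin n)) (f : Fin n → Fin n) : Prop :=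
  Set.InjOn f J ∧ NoCycleOn f J

/-- `g` dominates `f` with respect to the partition `(J₊, J₋)`: `g` differs from `f`
on `J`, with smaller-or-equal values on `J₊` and larger-or-equal values on `J₋`. -/
def Dominates {n : ℕ} (v : Fin n → ℝ) (Jp Jm : Finset (Fin n)) (g f : Fin n → Fin n) : Prop :=
  (∃ j ∈ Jp ∪ Jm, g j ≠ f j) ∧ (∀ j ∈ Jp, v (g j) ≤ v (f j)) ∧ (∀ j ∈ Jm, v (f j) ≤ v (g j))

open Finset Function Relation

/-!
A `J`-circuit `f` makes the functional graph of `f|_J` a disjoint union of paths, each of which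
leaves `J`. Such a graph can be grown one vertex `j₀ ∉ J` at a time: send `j₀` to any value outside
`f(J)` except the start of the path ending at `j₀` (paths ending at `j₀` have distinct starts, so at
most one value is excluded, and there are two to choose from while `|J| + 2 ≤ n`). With one vertex
left, the completed map is a permutation all of whose orbits pass through `j₀`, i.e. an `n`-cycle.
So every `J`-circuit is the restriction of a full circuit, and conversely.

Domination weakly decreases `∑ a_j v_{f j}` and strictly decreases
`∑_{J₊} v_{f j} - ∑_{J₋} v_{f j}`, so a minimiser of the latter among the `J`-circuits below a
given one is undominated.
-/

section Paths

variable {α : Type*} {J : Finset α} {f g : α → α} {a b y w : α}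

def StepIn (J : Finset α) (f : α → α) (a b : α) : Prop :=
  a ∈ J ∧ f a = b

lemma stepIn_congr (h : Set.EqOn g f J) : StepIn J g = StepIn J f := by
  ext a b
  exact and_congr_right fun ha => by rw [h ha]

lemma exists_iterate_eq_of_reflTransGen_stepIn (h : ReflTransGen (StepIn J f) a b) :
    ∃ k, f^[k] a = b := by
  induction h with
  | refl => exact ⟨0, rfl⟩
  | tail _ hbc ih =>
    obtain ⟨k, rfl⟩ := ih
    exact ⟨k + 1, by rw [iterate_succ_apply', hbc.2]⟩

lemma exists_reflTransGen_stepIn_notMem {k : ℕ} (h : f^[k] y ∉ J) :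
    ∃ w ∉ J, ReflTransGen (StepIn J f) y w := by
  induction k generalizing y with
  | zero => exact ⟨y, h, .refl⟩
  | succ k ih =>
    by_cases hy : y ∈ J
    · obtain ⟨w, hw, hpath⟩ := ih (y := f y) (by rwa [← iterate_succ_apply])
      exact ⟨w, hw, .head ⟨hy, rfl⟩ hpath⟩
    · exact ⟨y, hy, .refl⟩

lemma eq_of_reflTransGen_stepIn (hinj : Set.InjOn f J) {y₁ y₂ : α}
    (hy₁ : y₁ ∉ f '' J) (hy₂ : y₂ ∉ f '' J)
    (h₁ : ReflTransGen (StepIn J f) y₁ w) (h₂ : ReflTransGen (StepIn J f) y₂ w) : y₁ = y₂ := by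
  have hunique : Relator.RightUnique (swap (StepIn J f)) :=
    fun _ _ _ hb hc => hinj hb.1 hc.1 (hb.2.trans hc.2.symm)
  have hsource : ∀ {y z}, y ∉ f '' J → ReflTransGen (StepIn J f) z y → z = y :=
    fun hy h => h.cases_tail.elim Eq.symm fun ⟨c, _, hc⟩ => (hy ⟨c, hc.1, hc.2⟩).elim
  rcases (reflTransGen_swap.2 h₁).total_of_right_unique hunique (reflTransGen_swap.2 h₂)
    with h | h
  · exact (hsource hy₁ (reflTransGen_swap.1 h)).symm
  · exact hsource hy₂ (reflTransGen_swap.1 h)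

lemma Equiv.Perm.sameCycle_of_reflTransGen_stepIn {σ : Equiv.Perm α}
    (h : ReflTransGen (StepIn J σ) a b) : σ.SameCycle a b := by
  induction h with
  | refl => exact .refl _ _
  | tail _ hbc ih => exact hbc.2 ▸ Equiv.Perm.sameCycle_apply_right.2 ih

lemma injOn_insert_update [DecidableEq α] (hinj : Set.InjOn f J) (ha : a ∉ J) (hy : y ∉ f '' J) :
    Set.InjOn (update f a y) ↑(insert a J) := by
  have heq : Set.EqOn f (update f a y) J :=
    fun j hj => (update_of_ne (ne_of_mem_of_not_mem hj ha) _ _).symm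
  rw [coe_insert, Set.injOn_insert (by exact_mod_cast ha)]
  exact ⟨hinj.congr heq, by rwa [update_self, ← heq.image_eq]⟩

end Paths

section Circuits

variable {n : ℕ} {J : Finset (Fin n)} {f : Fin n → Fin n}

lemma noCycleOn_iff_forall_exists_reflTransGen_stepIn :
    NoCycleOn f J ↔ ∀ y, ∃ w ∉ J, ReflTransGen (StepIn J f) y w := by
  constructor
  · intro hnc y
    by_contra! hstay
    have hmem : ∀ t, f^[t] y ∈ J := fun t => by
      by_contra ht
      obtain ⟨w, hw, hyw⟩ := exists_reflTransGen_stepIn_notMem ht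
      exact hstay w hw hyw
    have hcycle : ∀ s t, s < t → f^[s] y ≠ f^[t] y := by
      intro s t hst heq
      refine hnc ⟨f^[s] y, hmem s, t - s, by omega, fun u _ => ?_, ?_⟩
      · rw [← iterate_add_apply]; exact hmem _
      · rw [← iterate_add_apply, Nat.sub_add_cancel hst.le, heq]
    obtain ⟨s, t, hne, heq⟩ := Finite.exists_ne_map_eq_of_infinite (fun t => f^[t] y)
    rcases hne.lt_or_gt with hst | hts
    · exact hcycle s t hst heq
    · exact hcycle t s hts heq.symm
  · rintro h ⟨j, -, k, hk, hiter, hperiodic⟩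
    obtain ⟨w, hw, hjw⟩ := h j
    obtain ⟨m, rfl⟩ := exists_iterate_eq_of_reflTransGen_stepIn hjw
    exact hw (IsPeriodicPt.iterate_mod_apply hperiodic m ▸ hiter _ (Nat.mod_lt _ hk))

lemma isJCircuit_insert_update {j₀ y : Fin n} (hf : IsJCircuit J f) (hj₀ : j₀ ∉ J)
    (hy : y ∉ f '' J) (hy_path : ¬ ReflTransGen (StepIn J f) y j₀) :
    IsJCircuit (insert j₀ J) (update f j₀ y) := by
  obtain ⟨hinj, hnc⟩ := hf
  rw [noCycleOn_iff_forall_exists_reflTransGen_stepIn] at hnc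
  refine ⟨injOn_insert_update hinj hj₀ hy,
    noCycleOn_iff_forall_exists_reflTransGen_stepIn.2 fun z => ?_⟩
  have hstep : StepIn J f ≤ StepIn (insert j₀ J) (update f j₀ y) := by
    rw [← stepIn_congr fun j hj => update_of_ne (ne_of_mem_of_not_mem hj hj₀) y f]
    exact fun _ _ h => ⟨mem_insert_of_mem h.1, h.2⟩
  have hlift := ReflTransGen.mono hstep
  obtain ⟨w, hwJ, hzw⟩ := hnc z
  by_cases hw : w = j₀
  · subst hw
    obtain ⟨u, huJ, hyu⟩ := hnc y
    have hu : u ≠ w := by rintro rfl; exact hy_path hyu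
    refine ⟨u, by simp [hu, huJ], (hlift _ _ hzw).trans ?_⟩
    exact .head ⟨mem_insert_self _ _, update_self _ _ _⟩ (hlift _ _ hyu)
  · exact ⟨w, by simp [hw, hwJ], hlift _ _ hzw⟩

lemma exists_isJCircuit_insert_update {j₀ : Fin n} (hf : IsJCircuit J f) (hj₀ : j₀ ∉ J)
    (hcard : J.card + 2 ≤ n) : ∃ y, IsJCircuit (insert j₀ J) (update f j₀ y) := by
  have hfree : 1 < (J.image f)ᶜ.card := by
    rw [card_compl, card_image_of_injOn hf.1, Fintype.card_fin]; omega
  obtain ⟨y₁, hy₁, y₂, hy₂, hne⟩ := one_lt_card.1 hfree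
  rw [mem_compl, ← mem_coe, coe_image] at hy₁ hy₂
  by_cases hbad : ReflTransGen (StepIn J f) y₁ j₀
  · exact ⟨y₂, isJCircuit_insert_update hf hj₀ hy₂
      fun hbad₂ => hne (eq_of_reflTransGen_stepIn hf.1 hy₁ hy₂ hbad hbad₂)⟩
  · exact ⟨y₁, isJCircuit_insert_update hf hj₀ hy₁ hbad⟩

lemma isCircuitPerm_of_forall_sameCycle (hn : 2 ≤ n) {σ : Equiv.Perm (Fin n)} {j₀ : Fin n}
    (h : ∀ z, σ.SameCycle z j₀) : IsCircuitPerm σ := by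
  have hmoved : ∀ z, σ z ≠ z := by
    intro z hz
    have : Nontrivial (Fin n) := Fin.nontrivial_iff_two_le.2 hn
    obtain ⟨x, y, hxy⟩ := exists_pair_ne (Fin n)
    have hall : ∀ x, z = x := fun x => ((h z).trans (h x).symm).eq_of_left hz
    exact hxy ((hall x).symm.trans (hall y))
  exact ⟨⟨j₀, hmoved j₀, fun y _ => (h y).symm⟩,
    eq_univ_of_forall fun z => Equiv.Perm.mem_support.2 (hmoved z)⟩

lemma exists_isCircuitPerm_eqOn_of_card_add_one (hn : 2 ≤ n) (hf : IsJCircuit J f)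
    (hcard : J.card + 1 = n) : ∃ σ : Equiv.Perm (Fin n), IsCircuitPerm σ ∧ ∀ j ∈ J, σ j = f j := by
  obtain ⟨j₀, hj₀⟩ := card_eq_one.1 (by rw [card_compl, Fintype.card_fin]; omega : Jᶜ.card = 1)
  obtain ⟨y₀, hy₀⟩ := card_eq_one.1
    (by rw [card_compl, card_image_of_injOn hf.1, Fintype.card_fin]; omega : (J.image f)ᶜ.card = 1)
  have hnotJ : ∀ w, w ∉ J ↔ w = j₀ := fun w => by rw [← mem_singleton, ← hj₀, mem_compl]
  have hj₀J : j₀ ∉ J := (hnotJ j₀).2 rfl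
  have hy₀J : y₀ ∉ f '' J := by
    rw [← coe_image, mem_coe, ← mem_compl, hy₀]; exact mem_singleton_self _
  have huniv : insert j₀ J = univ :=
    eq_univ_of_forall fun w => mem_insert.2 ((em (w ∈ J)).symm.imp (hnotJ w).1 id)
  have hinj : Injective (update f j₀ y₀) := by
    simpa only [huniv, coe_univ, Set.injOn_univ] using injOn_insert_update hf.1 hj₀J hy₀J
  let σ := Equiv.ofBijective _ (Finite.injective_iff_bijective.1 hinj)
  have hσf : Set.EqOn σ f J := fun j hj => update_of_ne (ne_of_mem_of_not_mem hj hj₀J) _ _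
  refine ⟨σ, isCircuitPerm_of_forall_sameCycle hn (j₀ := j₀) fun z => ?_, hσf⟩
  obtain ⟨w, hw, hzw⟩ := noCycleOn_iff_forall_exists_reflTransGen_stepIn.1 hf.2 z
  rw [← stepIn_congr hσf, (hnotJ w).1 hw] at hzw
  exact Equiv.Perm.sameCycle_of_reflTransGen_stepIn hzw

theorem exists_isCircuitPerm_eqOn (hn : 2 ≤ n) (hf : IsJCircuit J f) (hJ : J ≠ univ) :
    ∃ σ : Equiv.Perm (Fin n), IsCircuitPerm σ ∧ ∀ j ∈ J, σ j = f j := by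
  have hlt : J.card < n := by simpa using (card_lt_iff_ne_univ J).2 hJ
  obtain ⟨k, hk⟩ : ∃ k, J.card + 1 + k = n := ⟨n - (J.card + 1), by omega⟩
  clear hJ hlt
  induction k generalizing J f with
  | zero => exact exists_isCircuitPerm_eqOn_of_card_add_one hn hf (by omega)
  | succ k ih =>
    obtain ⟨j₀, -, hj₀⟩ := exists_mem_notMem_of_card_lt_card (s := J) (t := univ)
      (by rw [card_univ, Fintype.card_fin]; omega)
    obtain ⟨y, hy⟩ := exists_isJCircuit_insert_update hf hj₀ (by omega)
    obtain ⟨σ, hσ, hσf⟩ := ih hy (by rw [card_insert_of_notMem hj₀]; omega)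
    exact ⟨σ, hσ, fun j hj => (hσf j (mem_insert_of_mem hj)).trans
      (update_of_ne (ne_of_mem_of_not_mem hj hj₀) _ _)⟩

lemma isJCircuit_of_isCircuitPerm {σ : Equiv.Perm (Fin n)} (hσ : IsCircuitPerm σ)
    (hJ : J ≠ univ) : IsJCircuit J σ := by
  refine ⟨σ.injective.injOn, noCycleOn_iff_forall_exists_reflTransGen_stepIn.2 fun y => ?_⟩
  obtain ⟨z, hz⟩ : ∃ z, z ∉ J := by
    by_contra! h; exact hJ (eq_univ_of_forall h)
  have hmoved : ∀ x, σ x ≠ x := fun x => Equiv.Perm.mem_support.1 (hσ.2 ▸ mem_univ x)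
  obtain ⟨k, hk⟩ := hσ.1.exists_pow_eq (hmoved y) (hmoved z)
  exact exists_reflTransGen_stepIn_notMem (k := k) (by rwa [← Equiv.Perm.coe_pow, hk])

end Circuits

section Dominance

variable {n : ℕ} {v : Fin n → ℝ} {Jp Jm : Finset (Fin n)} {a : Fin n → ℝ} {f g : Fin n → Fin n}

def dominancePotential (v : Fin n → ℝ) (Jp Jm : Finset (Fin n)) (f : Fin n → Fin n) : ℝ :=
  ∑ j ∈ Jp, v (f j) - ∑ j ∈ Jm, v (f j)

lemma Dominates.sum_mul_le (hap : ∀ j ∈ Jp, 0 < a j) (ham : ∀ j ∈ Jm, a j < 0)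
    (h : Dominates v Jp Jm g f) :
    ∑ j ∈ Jp ∪ Jm, a j * v (g j) ≤ ∑ j ∈ Jp ∪ Jm, a j * v (f j) := by
  refine sum_le_sum fun j hj => ?_
  rcases mem_union.1 hj with hj | hj
  · exact mul_le_mul_of_nonneg_left (h.2.1 j hj) (hap j hj).le
  · exact mul_le_mul_of_nonpos_left (h.2.2 j hj) (ham j hj).le

lemma Dominates.dominancePotential_lt (hv : Injective v) (h : Dominates v Jp Jm g f) :
    dominancePotential v Jp Jm g < dominancePotential v Jp Jm f := by
  obtain ⟨⟨j₀, hj₀, hne⟩, hp, hm⟩ := h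
  have hvne : v (g j₀) ≠ v (f j₀) := hv.ne hne
  have hp_le : ∑ j ∈ Jp, v (g j) ≤ ∑ j ∈ Jp, v (f j) := sum_le_sum hp
  have hm_le : ∑ j ∈ Jm, v (f j) ≤ ∑ j ∈ Jm, v (g j) := sum_le_sum hm
  unfold dominancePotential
  rcases mem_union.1 hj₀ with hj₀ | hj₀
  · linarith [sum_lt_sum hp ⟨j₀, hj₀, (hp j₀ hj₀).lt_of_ne hvne⟩]
  · linarith [sum_lt_sum hm ⟨j₀, hj₀, (hm j₀ hj₀).lt_of_ne hvne.symm⟩]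

lemma exists_undominated_sum_mul_le (hv : Injective v) (hap : ∀ j ∈ Jp, 0 < a j)
    (ham : ∀ j ∈ Jm, a j < 0) (hf : IsJCircuit (Jp ∪ Jm) f) :
    ∃ g, IsJCircuit (Jp ∪ Jm) g ∧ (¬ ∃ h, IsJCircuit (Jp ∪ Jm) h ∧ Dominates v Jp Jm h g) ∧
      ∑ j ∈ Jp ∪ Jm, a j * v (g j) ≤ ∑ j ∈ Jp ∪ Jm, a j * v (f j) := by
  classical
  let below : Finset (Fin n → Fin n) :=
    {g | IsJCircuit (Jp ∪ Jm) g ∧ ∑ j ∈ Jp ∪ Jm, a j * v (g j) ≤ ∑ j ∈ Jp ∪ Jm, a j * v (f j)}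
  obtain ⟨g, hg, hmin⟩ :=
    exists_min_image below (dominancePotential v Jp Jm) ⟨f, by simp [below, hf]⟩
  simp only [below, mem_filter_univ] at hg hmin
  refine ⟨g, hg.1, fun ⟨h, hh, hdom⟩ => ?_, hg.2⟩
  exact (hdom.dominancePotential_lt hv).not_ge
    (hmin h ⟨hh, (hdom.sum_mul_le hap ham).trans hg.2⟩)

end Dominance

theorem stmt_5 (n : ℕ) (hn : 2 ≤ n) (v : Fin n → ℝ) (hv : StrictMono v)
    (Jp Jm : Finset (Fin n)) (hproper : Jp ∪ Jm ≠ Finset.univ)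
    (a : Fin n → ℝ) (hap : ∀ j ∈ Jp, 0 < a j) (ham : ∀ j ∈ Jm, a j < 0) (α : ℝ) :
    (∀ x : Fin n → ℝ, IsCircuitPt v x → α ≤ ∑ j ∈ Jp ∪ Jm, a j * x j) ↔
    (∀ f : Fin n → Fin n, IsJCircuit (Jp ∪ Jm) f →
      (¬ ∃ g : Fin n → Fin n, IsJCircuit (Jp ∪ Jm) g ∧ Dominates v Jp Jm g f) →
      α ≤ ∑ j ∈ Jp ∪ Jm, a j * v (f j)) := by
  constructor
  · intro hall f hf _
    obtain ⟨σ, hσ, hσf⟩ := exists_isCircuitPerm_eqOn hn hf hproper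
    calc α ≤ ∑ j ∈ Jp ∪ Jm, a j * v (σ j) := hall _ ⟨σ, hσ, fun _ => rfl⟩
      _ = ∑ j ∈ Jp ∪ Jm, a j * v (f j) := sum_congr rfl fun j hj => by rw [hσf j hj]
  · rintro hund x ⟨σ, hσ, hx⟩
    obtain ⟨g, hg, hg_und, hg_le⟩ :=
      exists_undominated_sum_mul_le hv.injective hap ham (isJCircuit_of_isCircuitPerm hσ hproper)
    calc α ≤ ∑ j ∈ Jp ∪ Jm, a j * v (g j) := hund g hg hg_und
      _ ≤ ∑ j ∈ Jp ∪ Jm, a j * v (σ j) := hg_le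
      _ = ∑ j ∈ Jp ∪ Jm, a j * x j := sum_congr rfl fun j _ => by rw [hx j]
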